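/- If A₁,...,Aₙ are groups such that every subgroup H ≤ Aᵢ satisfies rank(H) ≤ rank(Aᵢ), then every subgroup H of A₁ × ⋯ × Aₙ satisfies rank(H) ≤ rank(A₁) + ⋯ + rank(Aₙ). -/
import Mathlib

open Subgroup

/-- The property: every subgroup of `G` is generated by at most `r` elements. -/
def GenBound (G : Type*) [Group G] (r : ℕ) : Prop :=
  ∀ H : Subgroup G, ∃ S : Finset G, S.card ≤ r ∧ closure (S : Set G) = H

lemma genBound_of_mulEquiv {G G' : Type*} [Group G] [Group G'] (e : G ≃* G') {r : ℕ}
    (h : GenBound G r) : GenBound G' r := by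
  classical
  intro H'
  obtain ⟨S, hc, hcl⟩ := h (H'.comap e.toMonoidHom)
  refine ⟨S.image e, (Finset.card_image_le).trans hc, ?_⟩
  have : ((S.image e : Finset G') : Set G') = (e.toMonoidHom : G → G') '' (S : Set G) := by
    simp only [Finset.coe_image]; rfl
  rw [this, ← MonoidHom.map_closure, hcl,
    Subgroup.map_comap_eq_self_of_surjective e.surjective]

lemma genBound_prod {G K : Type*} [Group G] [Group K] {r s : ℕ}
    (hG : GenBound G r) (hK : GenBound K s) : GenBound (G × K) (r + s) := by
  classical
  intro H
  obtain ⟨T, hTcard, hTcl⟩ := hK (H.map (MonoidHom.snd G K))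
  have hlift : ∀ t ∈ T, ∃ h, h ∈ H ∧ h.2 = t := by
    intro t ht
    have : t ∈ H.map (MonoidHom.snd G K) := by
      rw [← hTcl]; exact subset_closure ht
    simpa [Subgroup.mem_map] using this
  choose! ℓ hℓH hℓ2 using hlift
  set N : Subgroup (G × K) := H ⊓ (MonoidHom.snd G K).ker with hN
  have memN_iff : ∀ x : G × K, x ∈ N ↔ x ∈ H ∧ x.2 = 1 := by
    intro x
    simp only [hN, Subgroup.mem_inf, MonoidHom.mem_ker, MonoidHom.coe_snd]
  obtain ⟨F, hFcard, hFcl⟩ := hG (N.map (MonoidHom.fst G K))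
  refine ⟨F.image (fun g => (g, (1 : K))) ∪ T.image ℓ, ?_, ?_⟩
  · exact (Finset.card_union_le _ _).trans
      (add_le_add ((Finset.card_image_le).trans hFcard)
        ((Finset.card_image_le).trans hTcard))
  · have hTl : closure ((T.image ℓ : Finset (G × K)) : Set (G × K)) ≤ H := by
      rw [closure_le]
      intro x hx
      simp only [Finset.coe_image, Set.mem_image, Finset.mem_coe] at hx
      obtain ⟨t, ht, rfl⟩ := hx
      exact hℓH t ht
    have hFmem : ∀ g ∈ F, ((g, (1 : K)) : G × K) ∈ N := by
      intro g hg
      have : g ∈ N.map (MonoidHom.fst G K) := by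
        rw [← hFcl]; exact subset_closure hg
      simp only [Subgroup.mem_map] at this
      obtain ⟨x, hx, hx1⟩ := this
      have hx2 : x.2 = 1 := ((memN_iff x).mp hx).2
      rw [memN_iff]
      have : x = (g, 1) := by
        ext
        · exact hx1
        · exact hx2
      rw [← this]
      exact (memN_iff x).mp hx
    apply le_antisymm
    · rw [closure_le]
      intro x hx
      simp only [Finset.coe_union, Set.mem_union, Finset.coe_image, Set.mem_image,
        Finset.mem_coe] at hx
      rcases hx with ⟨g, hg, rfl⟩ | ⟨t, ht, rfl⟩
      · exact ((memN_iff _).mp (hFmem g hg)).1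
      · exact hℓH t ht
    · intro h hh
      -- find y in closure of lifts with same second coordinate
      have h2 : h.2 ∈ closure (T : Set K) := by
        rw [hTcl]; exact ⟨h, hh, rfl⟩
      have hsub : closure (T : Set K) ≤
          (closure ((T.image ℓ : Finset (G × K)) : Set (G × K))).map (MonoidHom.snd G K) := by
        rw [closure_le]
        intro t ht
        refine ⟨ℓ t, subset_closure ?_, hℓ2 t ht⟩
        simp only [Finset.coe_image, Set.mem_image, Finset.mem_coe]
        exact ⟨t, ht, rfl⟩
      obtain ⟨y, hy, hy2⟩ := hsub h2
      have hyH : y ∈ H := hTl hy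
      have hy2' : y.2 = h.2 := hy2
      have hmemN : h * y⁻¹ ∈ N := by
        refine (memN_iff _).mpr ⟨mul_mem hh (inv_mem hyH), ?_⟩
        simp [Prod.snd_mul, hy2']
      have h1 : (h * y⁻¹).1 ∈ closure (F : Set G) := by
        rw [hFcl]; exact ⟨h * y⁻¹, hmemN, rfl⟩
      have heq : h * y⁻¹ = ((h * y⁻¹).1, (1 : K)) := by
        ext
        · rfl
        · exact ((memN_iff _).mp hmemN).2
      have hxcl : h * y⁻¹ ∈
          closure ((F.image (fun g => (g, (1 : K))) : Finset (G × K)) : Set (G × K)) := by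
        have : ((F.image (fun g => (g, (1 : K))) : Finset (G × K)) : Set (G × K)) =
            (MonoidHom.inl G K : G → G × K) '' (F : Set G) := by
          simp only [Finset.coe_image]; rfl
        rw [this, ← MonoidHom.map_closure]
        rw [heq]
        exact ⟨(h * y⁻¹).1, h1, rfl⟩
      have hmono : ∀ (U V : Finset (G × K)),
          closure ((U : Finset (G × K)) : Set (G × K)) ≤
            closure (((U ∪ V : Finset (G × K)) : Finset (G × K)) : Set (G × K)) := by
        intro U V
        apply Subgroup.closure_mono
        simp only [Finset.coe_union]
        exact Set.subset_union_left
      have hmono' : ∀ (U V : Finset (G × K)),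
          closure ((V : Finset (G × K)) : Set (G × K)) ≤
            closure (((U ∪ V : Finset (G × K)) : Finset (G × K)) : Set (G × K)) := by
        intro U V
        apply Subgroup.closure_mono
        simp only [Finset.coe_union]
        exact Set.subset_union_right
      have := mul_mem (hmono _ (T.image ℓ) hxcl) (hmono' (F.image fun g => (g, (1:K))) _ hy)
      simpa using this

/-- The multiplicative equivalence splitting off the first factor of a `Fin (n+1)`-indexed
product of groups. -/
def mulEquivPiFinSucc (n : ℕ) (A : Fin (n + 1) → Type*) [∀ i, Group (A i)] :
    (∀ i, A i) ≃* A 0 × ∀ i : Fin n, A i.succ where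
  toFun f := (f 0, fun i => f i.succ)
  invFun p := Fin.cons p.1 p.2
  left_inv f := by
    funext i
    refine Fin.cases ?_ ?_ i <;> simp
  right_inv p := by simp
  map_mul' f g := rfl

lemma genBound_pi : ∀ (n : ℕ) (A : Fin n → Type u) [∀ i, Group (A i)] (r : Fin n → ℕ),
    (∀ i, GenBound (A i) (r i)) → GenBound (∀ i, A i) (∑ i, r i) := by
  intro n
  induction n with
  | zero =>
    intro A _ r _ H
    refine ⟨∅, by simp, ?_⟩
    have : H = ⊥ := Subsingleton.elim _ _
    simp [this]
  | succ n ih =>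
    intro A _ r hr
    have h0 : GenBound (A 0 × ∀ i : Fin n, A i.succ) (r 0 + ∑ i : Fin n, r i.succ) :=
      genBound_prod (hr 0) (ih (fun i => A i.succ) (fun i => r i.succ) (fun i => hr i.succ))
    have := genBound_of_mulEquiv (mulEquivPiFinSucc n A).symm h0
    rwa [Fin.sum_univ_succ]

/-- If `A₁, …, Aₙ` are groups such that every subgroup `H ≤ Aᵢ` satisfies
`rank H ≤ rank Aᵢ`, then every subgroup `H` of `A₁ × ⋯ × Aₙ` satisfies
`rank H ≤ rank A₁ + ⋯ + rank Aₙ`. -/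
theorem subgroup_rank_pi_bound (n : ℕ) (A : Fin n → Type*) [∀ i, Group (A i)]
    [∀ i, Group.FG (A i)]
    (hA : ∀ i, ∀ H : Subgroup (A i),
      ∃ S : Finset (A i), S.card ≤ Group.rank (A i) ∧
        Subgroup.closure (S : Set (A i)) = H) :
    ∀ H : Subgroup (∀ i, A i),
      ∃ S : Finset (∀ i, A i), S.card ≤ ∑ i, Group.rank (A i) ∧
        Subgroup.closure (S : Set (∀ i, A i)) = H := by
  exact genBound_pi n A (fun i => Group.rank (A i)) hA
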